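/- arXiv:0911.3539 — 5 statements merged into one kernel-verified Lean document; each statement's English description precedes it below -/
import Mathlib

section
/- For every prime p ≠ 3 and every integer a, there exists a point (x,y,z) in (Z/pZ)^3 with x^3 + y^3 + z^3 = a and (x,y,z) a smooth point of the affine cubic surface, i.e. not all of 3x^2, 3y^2, 3z^2 vanish at it in Z/pZ. -/
/-!
If `a ≠ 0` in `ZMod p`, any representation of `a` as a sum of three cubes is a smooth point, since
`3 ≠ 0` makes the origin the only singular point; for `a = 0` take `(1, -1, 0)`. Every element is a
sum of three cubes by Cauchy–Davenport once the set `C` of cubes has `3 |C| ≥ p + 2`. If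
`p ≢ 1 mod 3`, cubing is a bijection. If `p ≡ 1 mod 3`, `x ↦ x³` is at most three-to-one, so
`3 |C| ≥ p`, and `3 |C|` cannot equal `p` or `p + 1`.
-/

open Finset Pointwise Polynomial

theorem FiniteField.exists_pow_eq_of_coprime {K : Type*} [Field K] [Fintype K] {n : ℕ}
    (hn0 : n ≠ 0) (hn : (Fintype.card K - 1).Coprime n) (b : K) : ∃ x : K, x ^ n = b := by
  classical
  obtain rfl | hb := eq_or_ne b 0
  · exact ⟨0, zero_pow hn0⟩
  have hunits : (Nat.card Kˣ).Coprime n := by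
    rwa [Nat.card_eq_fintype_card, Fintype.card_units]
  obtain ⟨v, hv⟩ := hunits.pow_left_bijective.surjective (Units.mk0 b hb)
  exact ⟨v, by simpa using congrArg Units.val hv⟩

theorem ZMod.add_add_eq_univ_of_card {p : ℕ} [Fact p.Prime] {A : Finset (ZMod p)} (hA : A.Nonempty)
    (hcard : p + 2 ≤ 3 * #A) : A + A + A = univ := by
  have hAA := ZMod.cauchy_davenport Fact.out hA hA
  have hAAA := ZMod.cauchy_davenport Fact.out (hA.add hA) hA
  have hAA_le : #(A + A) ≤ p := by simpa using card_le_univ (A + A)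
  have hAAA_le : #(A + A + A) ≤ p := by simpa using card_le_univ (A + A + A)
  rw [min_le_iff] at hAA hAAA
  apply eq_univ_of_card
  rw [ZMod.card]
  omega

theorem ZMod.add_two_le_three_mul_card_cubes {p : ℕ} [Fact p.Prime] :
    p + 2 ≤ 3 * #(univ.image fun x : ZMod p => x ^ 3) := by
  have hp2 := (Fact.out : p.Prime).two_le
  by_cases h1 : p % 3 = 1
  · have hcount : p ≤ 3 * #(univ.image fun x : ZMod p => x ^ 3) := by
      have := FiniteField.card_image_polynomial_eval (R := ZMod p)
        (p := (X ^ 3 : (ZMod p)[X])) (by rw [degree_X_pow]; norm_num)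
      rw [natDegree_X_pow, ZMod.card] at this
      simpa using this
    omega
  · have hcop : (Fintype.card (ZMod p) - 1).Coprime 3 := by
      rw [ZMod.card, Nat.coprime_comm, Nat.Prime.coprime_iff_not_dvd Nat.prime_three]
      omega
    have hsurj : univ.image (fun x : ZMod p => x ^ 3) = univ :=
      eq_univ_of_forall fun b => by
        simpa using FiniteField.exists_pow_eq_of_coprime three_ne_zero hcop b
    rw [hsurj, card_univ, ZMod.card]
    omega

theorem ZMod.exists_sum_three_cubes {p : ℕ} [Fact p.Prime] (b : ZMod p) :
    ∃ x y z : ZMod p, x ^ 3 + y ^ 3 + z ^ 3 = b := by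
  set C := univ.image fun x : ZMod p => x ^ 3
  have hC : C.Nonempty := univ_nonempty.image _
  have hb : b ∈ C + C + C := by
    rw [ZMod.add_add_eq_univ_of_card hC ZMod.add_two_le_three_mul_card_cubes]
    exact mem_univ b
  obtain ⟨_, hxy, _, hz, rfl⟩ := mem_add.mp hb
  obtain ⟨_, hx, _, hy, rfl⟩ := mem_add.mp hxy
  obtain ⟨x, -, rfl⟩ := mem_image.mp hx
  obtain ⟨y, -, rfl⟩ := mem_image.mp hy
  obtain ⟨z, -, rfl⟩ := mem_image.mp hz
  exact ⟨x, y, z, rfl⟩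

theorem stmt_7 (p : ℕ) (hp : p.Prime) (hp3 : p ≠ 3) (a : ℤ) :
    ∃ x y z : ZMod p, x ^ 3 + y ^ 3 + z ^ 3 = (a : ZMod p) ∧
      ¬(3 * x ^ 2 = 0 ∧ 3 * y ^ 2 = 0 ∧ 3 * z ^ 2 = 0) := by
  have : Fact p.Prime := ⟨hp⟩
  have h3 : (3 : ZMod p) ≠ 0 := by
    have : ((3 : ℕ) : ZMod p) ≠ 0 := by
      rw [Ne, ZMod.natCast_eq_zero_iff, Nat.prime_dvd_prime_iff_eq hp Nat.prime_three]
      exact hp3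
    exact_mod_cast this
  by_cases ha : (a : ZMod p) = 0
  · exact ⟨1, -1, 0, by rw [ha]; ring, by simp [h3]⟩
  · obtain ⟨x, y, z, hxyz⟩ := ZMod.exists_sum_three_cubes (a : ZMod p)
    refine ⟨x, y, z, hxyz, ?_⟩
    rintro ⟨hx, hy, hz⟩
    simp only [mul_eq_zero, h3, false_or, pow_eq_zero_iff two_ne_zero] at hx hy hz
    subst hx hy hz
    exact ha (by simpa using hxyz.symm)
end

section
/- For every integer a, the equation x^3 + y^3 + 2*z^3 = a has a solution in the 2-adic integers Z_2. -/
/-!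
Every unit `u` of `ℤ_[2]` is a cube: the residue field is `𝔽₂`, so `u³ ≡ u (mod 2)`, and the
derivative `3u²` is a unit, so Hensel's lemma lifts the approximate root `u` of `X³ - u`. Hence `a = a³ + 0³ + 2·0³` for
odd `a`, and `a = (a - 1) + 1³ + 2·0³` for even `a`.
-/

open Polynomial

namespace PadicInt

theorem norm_sub_one_lt_one_of_isUnit {u : ℤ_[2]} (hu : IsUnit u) : ‖u - 1‖ < 1 := by
  have hu1 : toZMod u = 1 := by
    have hnonzero : ∀ r : ZMod 2, r ≠ 0 → r = 1 := by decide
    exact hnonzero _ (hu.map toZMod).ne_zero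
  rw [← not_isUnit_iff, ← mem_nonunits_iff, ← IsLocalRing.mem_maximalIdeal, ← ker_toZMod,
    RingHom.mem_ker, map_sub, hu1, map_one, sub_self]

theorem exists_pow_three_eq_of_isUnit {u : ℤ_[2]} (hu : IsUnit u) : ∃ x : ℤ_[2], x ^ 3 = u := by
  have hderiv : ‖(X ^ 3 - C u).derivative.aeval u‖ = 1 := by
    have h3 : ‖(3 : ℤ_[2])‖ = 1 := by
      simpa using (norm_intCast_eq_one_iff (p := 2) (z := 3)).2 (by norm_num)
    simp [derivative_pow, h3, isUnit_iff.mp hu]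
  have hval : ‖(X ^ 3 - C u).aeval u‖ < 1 := by
    have hfactor : u ^ 3 - u = u * (u + 1) * (u - 1) := by ring
    simpa [hfactor, norm_mul, isUnit_iff.mp hu] using
      mul_lt_one_of_nonneg_of_lt_one_right (norm_le_one (u + 1)) (norm_nonneg _)
        (norm_sub_one_lt_one_of_isUnit hu)
  obtain ⟨x, hx, -⟩ := hensels_lemma (F := X ^ 3 - C u) (a := u) (by rwa [hderiv, one_pow])
  exact ⟨x, by simpa [sub_eq_zero] using hx⟩

theorem isUnit_intCast_of_odd {n : ℤ} (hn : Odd n) : IsUnit (n : ℤ_[2]) := by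
  rwa [isUnit_iff, norm_intCast_eq_one_iff, Nat.cast_ofNat, Int.isCoprime_two_right]

end PadicInt

theorem stmt_10 (a : ℤ) :
    ∃ x y z : ℤ_[2], x ^ 3 + y ^ 3 + 2 * z ^ 3 = (a : ℤ_[2]) := by
  rcases Int.even_or_odd a with ha | ha
  · obtain ⟨x, hx⟩ := PadicInt.exists_pow_three_eq_of_isUnit
      (PadicInt.isUnit_intCast_of_odd (ha.sub_odd odd_one))
    exact ⟨x, 1, 0, by rw [hx]; push_cast; ring⟩
  · obtain ⟨x, hx⟩ := PadicInt.exists_pow_three_eq_of_isUnit (PadicInt.isUnit_intCast_of_odd ha)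
    exact ⟨x, 0, 0, by rw [hx]; ring⟩
end

section
/- For every integer a, the equation x^3 + y^3 + 2*z^3 = a has a solution in the 3-adic integers Z_3. -/
/-! Hensel's lemma for `X ^ p - b` at `1` makes every `b ≡ 1 mod p³` in `ℤ_[p]` a `p`-th power, and
for odd `p` so is every `b ≡ -1 mod p³`. A finite search shows that every residue `a` mod `27` is
`y³ + 2z³ ± 1` for suitable `y, z`, so `a - y³ - 2z³` is a cube in `ℤ_[3]`. -/

open Polynomial

namespace PadicInt

variable {p : ℕ} [Fact p.Prime]

theorem exists_pow_eq_of_norm_sub_one_lt {b : ℤ_[p]} (hb : ‖b - 1‖ < ‖(p : ℤ_[p])‖ ^ 2) :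
    ∃ u : ℤ_[p], u ^ p = b := by
  have hF : ‖aeval (1 : ℤ_[p]) (X ^ p - C b)‖ <
      ‖aeval (1 : ℤ_[p]) (derivative (X ^ p - C b))‖ ^ 2 := by
    simpa [norm_sub_rev, derivative_X_pow, norm_p] using hb
  obtain ⟨u, hu, -⟩ := hensels_lemma hF
  exact ⟨u, by simpa [sub_eq_zero] using hu⟩

theorem exists_pow_eq_of_toZModPow_eq_one {b : ℤ_[p]} (hb : toZModPow 3 b = 1) :
    ∃ u : ℤ_[p], u ^ p = b := by
  refine exists_pow_eq_of_norm_sub_one_lt ?_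
  have hmem : b - 1 ∈ Ideal.span {(p : ℤ_[p]) ^ 3} := by
    rw [← ker_toZModPow, RingHom.mem_ker, map_sub, hb, map_one, sub_self]
  have hp : (1 : ℝ) < p := by exact_mod_cast (Fact.out : p.Prime).one_lt
  calc ‖b - 1‖ ≤ (p : ℝ) ^ (-(3 : ℕ) : ℤ) := (norm_le_pow_iff_mem_span_pow _ 3).mpr hmem
    _ < (p : ℝ) ^ (-(2 : ℕ) : ℤ) := zpow_lt_zpow_right₀ hp (by norm_num)
    _ = ‖(p : ℤ_[p])‖ ^ 2 := by simp [norm_p]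

theorem exists_pow_eq_of_toZModPow_eq_one_or_neg_one (hp : Odd p) {b : ℤ_[p]}
    (hb : toZModPow 3 b = 1 ∨ toZModPow 3 b = -1) : ∃ u : ℤ_[p], u ^ p = b := by
  rcases hb with hb | hb
  · exact exists_pow_eq_of_toZModPow_eq_one hb
  · obtain ⟨u, hu⟩ := exists_pow_eq_of_toZModPow_eq_one (b := -b) (by rw [map_neg, hb, neg_neg])
    exact ⟨-u, by rw [hp.neg_pow, hu, neg_neg]⟩

end PadicInt

theorem ZMod.exists_sub_cube_sub_two_mul_cube_eq_one_or_neg_one (r : ZMod 27) :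
    ∃ y z : ZMod 27, r - y ^ 3 - 2 * z ^ 3 = 1 ∨ r - y ^ 3 - 2 * z ^ 3 = -1 := by
  revert r; decide

theorem stmt_11 (a : ℤ) :
    ∃ x y z : ℤ_[3], x ^ 3 + y ^ 3 + 2 * z ^ 3 = (a : ℤ_[3]) := by
  obtain ⟨y, z, hyz⟩ := ZMod.exists_sub_cube_sub_two_mul_cube_eq_one_or_neg_one a
  obtain ⟨x, hx⟩ := PadicInt.exists_pow_eq_of_toZModPow_eq_one_or_neg_one (p := 3) (by decide)
    (b := a - (y.val : ℤ_[3]) ^ 3 - 2 * (z.val : ℤ_[3]) ^ 3) (by simpa [map_ofNat] using hyz)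
  exact ⟨x, y.val, z.val, by rw [hx]; ring⟩
end

section
/- There are no integers x, y, z with 16*x^2 + 9*y^2 - 3*z^2 = 1, yet this equation has solutions in the real numbers and in Z_p for every prime p. -/
/-!
Modulo 3 we may write `x = ±(3k + 1)`, and the equation becomes
`(12k + 5)(4k + 1) = z² - 3y²` with coprime factors. If 3 is not a square modulo a prime `q`,
the form `z² - 3y²` is anisotropic modulo `q`, so its `q`-adic valuation is even, and so is that
of `12k + 5`. By quadratic reciprocity 3 is a square modulo a prime `q ≥ 5` exactly when
`q ≡ ±1 (mod 12)`; the other primes are `≡ ±5` and divide `12k + 5` to even powers, which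
forces `12k + 5 ≡ ±1 (mod 12)`, a contradiction. Locally, `x = 1/4` solves the equation over
`ℝ` and `ℤ_[3]`, and `y = 1/3` over every other `ℤ_[p]`.
-/

theorem dvd_and_dvd_of_dvd_sq_sub_three_mul_sq {q : ℕ} [Fact q.Prime]
    (h3 : ¬IsSquare (3 : ZMod q)) {y z : ℤ} (h : (q : ℤ) ∣ z ^ 2 - 3 * y ^ 2) :
    (q : ℤ) ∣ z ∧ (q : ℤ) ∣ y := by
  simp only [← ZMod.intCast_zmod_eq_zero_iff_dvd] at h ⊢
  push_cast at h
  have hy : (y : ZMod q) = 0 := by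
    by_contra hy
    exact h3 ⟨z / y, by field_simp; linear_combination -h⟩
  rw [hy] at h
  exact ⟨pow_eq_zero_iff two_ne_zero |>.mp (by linear_combination h), hy⟩

theorem even_padicValInt_sq_sub_three_mul_sq {q : ℕ} [hq : Fact q.Prime]
    (h3 : ¬IsSquare (3 : ZMod q)) (y z : ℤ) : Even (padicValInt q (z ^ 2 - 3 * y ^ 2)) := by
  induction hn : (z ^ 2 - 3 * y ^ 2).natAbs using Nat.strong_induction_on generalizing y z with
  | _ n ih =>
  by_cases hdvd : (q : ℤ) ∣ z ^ 2 - 3 * y ^ 2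
  · obtain ⟨⟨z', rfl⟩, ⟨y', rfl⟩⟩ := dvd_and_dvd_of_dvd_sq_sub_three_mul_sq h3 hdvd
    have hq0 : (q : ℤ) ≠ 0 := by exact_mod_cast hq.out.ne_zero
    have hsq : (q * z') ^ 2 - 3 * (q * y') ^ 2 = (z' ^ 2 - 3 * y' ^ 2) * q * q := by ring
    rcases eq_or_ne (z' ^ 2 - 3 * y' ^ 2) 0 with h0 | h0
    · simp [hsq, h0]
    · have hlt : (z' ^ 2 - 3 * y' ^ 2).natAbs < n := by
        rw [← hn, hsq, Int.natAbs_mul, Int.natAbs_mul, Int.natAbs_natCast]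
        have := Int.natAbs_pos.mpr h0
        nlinarith [hq.out.two_le, mul_pos this hq.out.pos]
      rw [hsq, padicValInt_mul_eq_succ _ (mul_ne_zero h0 hq0), padicValInt_mul_eq_succ _ h0]
      exact (ih _ hlt y' z' rfl).add_one.add_one
  · simp [padicValInt.eq_zero_of_not_dvd hdvd]

theorem mod_twelve_of_isSquare_three {q : ℕ} [hq : Fact q.Prime] (h2 : q ≠ 2) (h3 : q ≠ 3)
    (hsq : IsSquare (3 : ZMod q)) : q % 12 = 1 ∨ q % 12 = 11 := by
  have two_not_square : ¬IsSquare ((2 : ℕ) : ZMod 3) := by decide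
  have : Fact (Nat.Prime 3) := ⟨Nat.prime_three⟩
  have hodd : q % 2 = 1 := hq.out.eq_two_or_odd.resolve_left h2
  have h3ndvd : ¬3 ∣ q := fun h =>
    h3 ((Nat.prime_dvd_prime_iff_eq Nat.prime_three hq.out).mp h).symm
  have hq3 : (q : ZMod 3) = ((q % 3 : ℕ) : ZMod 3) := (ZMod.natCast_mod q 3).symm
  rw [← Nat.cast_ofNat (R := ZMod q) (n := 3)] at hsq
  obtain h4 | h4 : q % 4 = 1 ∨ q % 4 = 3 := by omega
  · rw [ZMod.exists_sq_eq_prime_iff_of_mod_four_eq_one h4 (by decide), hq3] at hsq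
    obtain h | h : q % 3 = 1 ∨ q % 3 = 2 := by omega
    · omega
    · rw [h] at hsq; exact absurd hsq two_not_square
  · rw [ZMod.exists_sq_eq_prime_iff_of_mod_four_eq_three h4 (by decide) h3, hq3] at hsq
    obtain h | h : q % 3 = 1 ∨ q % 3 = 2 := by omega
    · rw [h] at hsq; exact absurd ⟨1, rfl⟩ hsq
    · omega

theorem natCast_zmod_twelve_eq_one_or_neg_one {n : ℕ} (hn : n.Coprime 6)
    (heven : ∀ q, q.Prime → ¬IsSquare (3 : ZMod q) → Even (n.factorization q)) :
    (n : ZMod 12) = 1 ∨ (n : ZMod 12) = -1 := by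
  have hn0 : n ≠ 0 := by rintro rfl; norm_num at hn
  rw [Nat.prod_primeFactors_pow_factorization hn0]
  push_cast
  refine Finset.prod_induction _ (fun a : ZMod 12 => a = 1 ∨ a = -1) (by decide) (.inl rfl) ?_
  intro q hq
  have hqp := Nat.prime_of_mem_primeFactors hq
  have : Fact q.Prime := ⟨hqp⟩
  have hq6 : q.Coprime 6 := hn.coprime_dvd_left (Nat.dvd_of_mem_primeFactors hq)
  have h2 : ¬2 ∣ q := fun h => absurd (hq6.coprime_dvd_left h) (by decide)
  have h3 : ¬3 ∣ q := fun h => absurd (hq6.coprime_dvd_left h) (by decide)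
  have hq12 : (q : ZMod 12) = ((q % 12 : ℕ) : ZMod 12) := (ZMod.natCast_mod q 12).symm
  by_cases hsq : IsSquare (3 : ZMod q)
  · rcases mod_twelve_of_isSquare_three (by omega) (by omega) hsq with h | h <;> rw [hq12, h]
    · simp
    · exact neg_one_pow_eq_or (ZMod 12) _
  · obtain ⟨k, hk⟩ := heven q hqp hsq
    have hsq1 : (q : ZMod 12) ^ 2 = 1 := by
      have : q % 12 = 1 ∨ q % 12 = 5 ∨ q % 12 = 7 ∨ q % 12 = 11 := by omega
      rw [hq12]; rcases this with h | h | h | h <;> rw [h] <;> decide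
    left
    rw [hk, ← two_mul, pow_mul, hsq1, one_pow]

theorem intCast_zmod_twelve_eq_one_or_neg_one_of_mul_eq {b c y z : ℤ} (hb : IsCoprime b 6)
    (hbc : IsCoprime b c) (h : b * c = z ^ 2 - 3 * y ^ 2) :
    (b : ZMod 12) = 1 ∨ (b : ZMod 12) = -1 := by
  rcases eq_or_ne c 0 with rfl | hc
  · rcases Int.isUnit_iff.mp (isCoprime_zero_right.mp hbc) with rfl | rfl <;> simp
  have hb0 : b ≠ 0 := by rintro rfl; exact absurd (isCoprime_zero_left.mp hb) (by decide)
  suffices (b.natAbs : ZMod 12) = 1 ∨ (b.natAbs : ZMod 12) = -1 by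
    rcases Int.natAbs_eq b with hb | hb <;> rw [hb] <;> simp only [Int.cast_neg, Int.cast_natCast]
    · exact this
    · rcases this with h | h <;> simp [h]
  refine natCast_zmod_twelve_eq_one_or_neg_one (Int.isCoprime_iff_nat_coprime.mp hb) ?_
  intro q hq hsq
  have : Fact q.Prime := ⟨hq⟩
  rw [Nat.factorization_def _ hq, ← padicValInt]
  by_cases hqb : (q : ℤ) ∣ b
  · have hqc : ¬(q : ℤ) ∣ c := fun hqc =>
      (Nat.prime_iff_prime_int.mp hq).not_isUnit (hbc.isUnit_of_dvd' hqb hqc)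
    have hvb : padicValInt q b = padicValInt q (b * c) := by
      rw [padicValInt.mul hb0 hc, padicValInt.eq_zero_of_not_dvd hqc, add_zero]
    rw [hvb, h]
    exact even_padicValInt_sq_sub_three_mul_sq hsq y z
  · simp [padicValInt.eq_zero_of_not_dvd hqb]

theorem Int.exists_sq_eq_sq_three_mul_add_one {x : ℤ} (hx : ¬3 ∣ x) :
    ∃ k, x ^ 2 = (3 * k + 1) ^ 2 := by
  rcases (by omega : x % 3 = 1 ∨ x % 3 = 2) with h | h
  · exact ⟨x / 3, by congr 1; omega⟩
  · exact ⟨-(x / 3) - 1, by rw [← neg_sq]; congr 1; omega⟩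

theorem PadicInt.exists_natCast_mul_eq_one {p : ℕ} [Fact p.Prime] {n : ℕ} (hn : p.Coprime n) :
    ∃ w : ℤ_[p], n * w = 1 :=
  (isUnit_iff.mpr (norm_natCast_eq_one_iff.mpr hn)).exists_right_inv

theorem stmt_15 :
    (¬∃ x y z : ℤ, 16 * x ^ 2 + 9 * y ^ 2 - 3 * z ^ 2 = 1) ∧
    (∃ x y z : ℝ, 16 * x ^ 2 + 9 * y ^ 2 - 3 * z ^ 2 = 1) ∧
    (∀ (p : ℕ) [Fact p.Prime], ∃ x y z : ℤ_[p], 16 * x ^ 2 + 9 * y ^ 2 - 3 * z ^ 2 = 1) := by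
  refine ⟨?_, ⟨1 / 4, 0, 0, by norm_num⟩, fun p hp => ?_⟩
  · rintro ⟨x, y, z, h⟩
    have hx3 : ¬(3 : ℤ) ∣ x := by
      rintro ⟨m, rfl⟩
      have : (3 : ℤ) ∣ 1 := ⟨48 * m ^ 2 + 3 * y ^ 2 - z ^ 2, by linear_combination -h⟩
      omega
    obtain ⟨k, hx2⟩ := Int.exists_sq_eq_sq_three_mul_add_one hx3
    have hnorm : (12 * k + 5) * (4 * k + 1) = z ^ 2 - 3 * y ^ 2 := by linarith
    have h5 : ((12 * k + 5 : ℤ) : ZMod 12) = 5 := by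
      push_cast
      rw [show (12 : ZMod 12) = 0 from rfl]
      ring
    have := intCast_zmod_twelve_eq_one_or_neg_one_of_mul_eq ⟨-1, 2 * k + 1, by ring⟩
      ⟨-2 * k, 6 * k + 1, by ring⟩ hnorm
    rw [h5] at this
    exact absurd this (by decide)
  · by_cases hp3 : p = 3
    · subst hp3
      obtain ⟨w, hw⟩ := PadicInt.exists_natCast_mul_eq_one (p := 3) (n := 4) (by decide)
      push_cast at hw
      exact ⟨w, 0, 0, by linear_combination (4 * w + 1) * hw⟩
    · obtain ⟨w, hw⟩ := PadicInt.exists_natCast_mul_eq_one (n := 3)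
        ((Nat.coprime_primes hp.out Nat.prime_three).mpr hp3)
      push_cast at hw
      exact ⟨0, w, 0, by linear_combination (3 * w + 1) * hw⟩
end

section
/- The rational point (-1/15, -17/15, 6/5) satisfies x^3 + y^3 + 2*z^3 = 2, and its 2-adic distances to (9, 9, -2*c), where c is the cube root of 91 in Z_2, satisfy v_2(x-9) ≥ 3, v_2(y-9) ≥ 3, v_2(z+2c) ≥ 2. -/
/-! Each of the three differences is a 2-adic integer divided by an odd integer:
`-136/15`, `-152/15` and `(6 + 10c)/5`. Since `c³ = 91` is odd, `c ≡ 1 (mod 2)`, so `4 ∣ 6 + 10c`;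
and `6 + 10c ≠ 0` because `(10c)³ = 91000 ≠ -216 = (-6)³`. -/

namespace PadicInt

variable {p : ℕ} [Fact p.Prime]

@[simp, norm_cast]
theorem coe_ofNat (n : ℕ) [n.AtLeastTwo] : ((ofNat(n) : ℤ_[p]) : ℚ_[p]) = ofNat(n) :=
  coe_natCast n

theorem p_dvd_sub_iff_toZMod_eq {x y : ℤ_[p]} : (p : ℤ_[p]) ∣ x - y ↔ toZMod x = toZMod y := by
  rw [← Ideal.mem_span_singleton, ← maximalIdeal_eq_span_p, ← ker_toZMod, RingHom.mem_ker,
    map_sub, sub_eq_zero]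

theorem two_dvd_sub_one_of_pow_eq_odd {c : ℤ_[2]} {n : ℕ} (hn : n ≠ 0) {m : ℤ} (hm : Odd m)
    (h : c ^ n = m) : (2 : ℤ_[2]) ∣ c - 1 := by
  have hres : toZMod c ^ n = 1 := by
    rw [← map_pow, h, map_intCast, ZMod.intCast_eq_one_iff_odd.2 hm]
  have hc : toZMod c = 1 := by
    rcases (by decide : ∀ a : ZMod 2, a = 0 ∨ a = 1) (toZMod c) with h0 | h1
    · rw [h0, zero_pow hn] at hres
      exact absurd hres zero_ne_one
    · exact h1
  exact_mod_cast p_dvd_sub_iff_toZMod_eq.2 (hc.trans (map_one _).symm)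

theorem le_valuation_coe_div_of_pow_dvd {z : ℤ_[p]} (hz : z ≠ 0) {n : ℤ} (hn : ¬ (p : ℤ) ∣ n)
    {k : ℕ} (hk : (p : ℤ_[p]) ^ k ∣ z) : (k : ℤ) ≤ ((z : ℚ_[p]) / n).valuation := by
  have hn0 : (n : ℚ_[p]) ≠ 0 := Int.cast_ne_zero.2 (by rintro rfl; exact hn (dvd_zero _))
  rw [div_eq_mul_inv, Padic.valuation_mul (coe_ne_zero.2 hz) (inv_ne_zero hn0),
    Padic.valuation_inv, Padic.valuation_intCast, padicValInt.eq_zero_of_not_dvd hn,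
    valuation_coe]
  simpa using (mem_span_pow_iff_le_valuation z hz k).1 (Ideal.mem_span_singleton.2 hk)

end PadicInt

/-- The rational point `(-1/15, -17/15, 6/5)` lies on `x³ + y³ + 2z³ = 2` and is 2-adically
close to the solution `(9, 9, -2c)`, where `c` is the cube root of `91` in `ℤ₂`:
`v₂(x - 9) ≥ 3`, `v₂(y - 9) ≥ 3` and `v₂(z + 2c) ≥ 2`. -/
theorem stmt_19 (c : ℤ_[2]) (hc : c ^ 3 = 91) :
    ((-1 / 15 : ℚ) ^ 3 + (-17 / 15 : ℚ) ^ 3 + 2 * (6 / 5 : ℚ) ^ 3 = 2) ∧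
    3 ≤ ((-1 / 15 : ℚ_[2]) - 9).valuation ∧
    3 ≤ ((-17 / 15 : ℚ_[2]) - 9).valuation ∧
    2 ≤ ((6 / 5 : ℚ_[2]) + 2 * (c : ℚ_[2])).valuation := by
  refine ⟨by norm_num, ?_, ?_, ?_⟩
  · rw [show (-1 / 15 : ℚ_[2]) - 9 = ((-136 : ℤ_[2]) : ℚ_[2]) / (15 : ℤ) by push_cast; ring]
    exact PadicInt.le_valuation_coe_div_of_pow_dvd (k := 3) (by norm_num) (by decide)
      ⟨-17, by norm_num⟩
  · rw [show (-17 / 15 : ℚ_[2]) - 9 = ((-152 : ℤ_[2]) : ℚ_[2]) / (15 : ℤ) by push_cast; ring]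
    exact PadicInt.le_valuation_coe_div_of_pow_dvd (k := 3) (by norm_num) (by decide)
      ⟨-19, by norm_num⟩
  · obtain ⟨d, hd⟩ := PadicInt.two_dvd_sub_one_of_pow_eq_odd three_ne_zero
      (m := 91) (by decide) (by exact_mod_cast hc)
    have hz : 6 + 10 * c ≠ 0 := fun h ↦ by
      have : (91216 : ℤ_[2]) = 0 := by
        linear_combination (100 * c ^ 2 - 60 * c + 36) * h - 1000 * hc
      norm_num at this
    rw [show (6 / 5 : ℚ_[2]) + 2 * c = ((6 + 10 * c : ℤ_[2]) : ℚ_[2]) / (5 : ℤ) by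
      push_cast; ring]
    exact PadicInt.le_valuation_coe_div_of_pow_dvd (k := 2) hz (by decide)
      ⟨4 + 5 * d, by linear_combination 10 * hd⟩
end
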